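/- arXiv:2410.02634 — 9 statements merged into one kernel-verified Lean document; each statement's English description precedes it below -/
import Mathlib

section
/- A conditionally-smooth fitness landscape has exactly one local peak, which is the global peak x*. -/
variable {n : ℕ}

/-- Flip bit `i` of assignment `x`. -/
def flipBit (x : Fin n → Bool) (i : Fin n) : Fin n → Bool :=
  Function.update x i (!(x i))

/-- `x` is a local peak of the fitness landscape `f`. -/
def LocalPeak (f : (Fin n → Bool) → ℤ) (x : Fin n → Bool) : Prop :=
  ∀ i, f (flipBit x i) ≤ f x

/-- `f` is `≺`-smooth with optimum `xs`. -/
def PrecSmooth (r : Fin n → Fin n → Prop) (f : (Fin n → Bool) → ℤ)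
    (xs : Fin n → Bool) : Prop :=
  ∀ (j : Fin n) (x : Fin n → Bool), (∀ i, r i j → x i = xs i) →
    f (Function.update x j (xs j)) > f (Function.update x j (!(xs j)))

theorem hammingDist_update_lt {ι : Type*} [Fintype ι] [DecidableEq ι] {β : ι → Type*}
    [∀ i, DecidableEq (β i)] {x y : ∀ i, β i} {j : ι} (h : x j ≠ y j) :
    hammingDist (Function.update x j (y j)) y < hammingDist x y := by
  apply Finset.card_lt_card
  rw [Finset.ssubset_iff_of_subset]
  · exact ⟨j, by simpa using h, by simp⟩
  · intro i
    rcases eq_or_ne i j with rfl | hij <;> simp_all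

theorem update_eq_flipBit {x : Fin n → Bool} {j : Fin n} {b : Bool} (h : x j ≠ b) :
    Function.update x j b = flipBit x j := by
  rw [flipBit, Bool.eq_not_iff.mpr h.symm]

namespace PrecSmooth

variable {r : Fin n → Fin n → Prop} {f : (Fin n → Bool) → ℤ} {xs : Fin n → Bool}

theorem localPeak (hs : PrecSmooth r f xs) : LocalPeak f xs := fun i => by
  simpa [flipBit] using (hs i xs fun _ _ => rfl).le

/-- Correcting an `r`-minimal wrong coordinate of `y` is a strict improvement, since `y` already
agrees with `xs` below it. -/
theorem exists_lt_update (hs : PrecSmooth r f xs) (hr : WellFounded r) {y : Fin n → Bool}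
    (hy : y ≠ xs) : ∃ j, y j ≠ xs j ∧ f y < f (Function.update y j (xs j)) := by
  obtain ⟨j, hj, hmin⟩ := hr.has_min {j | y j ≠ xs j} (Function.ne_iff.mp hy)
  have below : ∀ i, r i j → y i = xs i := fun i hij => not_not.mp fun hi => hmin i hi hij
  refine ⟨j, hj, ?_⟩
  simpa [← Bool.eq_not_iff.mpr hj] using hs j y below

theorem eq_of_localPeak (hs : PrecSmooth r f xs) (hr : WellFounded r) {y : Fin n → Bool}
    (hy : LocalPeak f y) : y = xs := by
  by_contra hne
  obtain ⟨j, hj, hlt⟩ := hs.exists_lt_update hr hne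
  rw [update_eq_flipBit hj] at hlt
  exact (hy j).not_gt hlt

theorem le_optimum (hs : PrecSmooth r f xs) (hr : WellFounded r) (y : Fin n → Bool) :
    f y ≤ f xs := by
  induction y using (measure fun y => hammingDist y xs).wf.induction with
  | h y ih =>
    by_cases hy : y = xs
    · rw [hy]
    obtain ⟨j, hj, hlt⟩ := hs.exists_lt_update hr hy
    exact hlt.le.trans (ih _ (hammingDist_update_lt hj))

end PrecSmooth

/-- A conditionally-smooth fitness landscape has exactly one local peak,
which is the global peak `xs`. -/
theorem conditionallySmooth_unique_local_peak
    (f : (Fin n → Bool) → ℤ) (r : Fin n → Fin n → Prop)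
    (hr : IsStrictOrder (Fin n) r) (xs : Fin n → Bool)
    (hs : PrecSmooth r f xs) :
    LocalPeak f xs ∧ (∀ y, LocalPeak f y → y = xs) ∧ (∀ y, f y ≤ f xs) := by
  have hwf : WellFounded r :=
    haveI := hr.toIrrefl
    haveI := hr.toIsTrans
    Finite.wellFounded_of_trans_of_irrefl r
  exact ⟨hs.localPeak, fun _ => hs.eq_of_localPeak hwf, hs.le_optimum hwf⟩
end

section
/- In a ≺-smooth fitness landscape with optimum x*, from any initial assignment x⁰ there exists a strictly fitness-increasing sequence of adjacent assignments from x⁰ to x* whose length equals the Hamming distance between x⁰ and x* (in particular, length at most n). -/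
/-!
Repair the mismatches one at a time, each time at a coordinate `m` that is `≺`-minimal among the
coordinates where the current assignment `x` differs from `x*`. Every `i ≺ m` then already agrees
with `x*`, so smoothness at `m` says that setting `x m` to `x* m` strictly increases the fitness,
and the Hamming distance to `x*` drops by one. Since `≺` is a strict order on a finite set, such a
minimal coordinate exists as long as `x ≠ x*`.
-/

variable {n : ℕ}

/-- Hamming distance between two assignments. -/
def hamDist (x y : Fin n → Bool) : ℕ :=
  (Finset.univ.filter fun i => x i ≠ y i).card

theorem hamDist_eq_hammingDist (x y : Fin n → Bool) : hamDist x y = hammingDist x y := rfl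

theorem flipBit_eq_update_of_ne {x : Fin n → Bool} {i : Fin n} {b : Bool} (h : x i ≠ b) :
    flipBit x i = Function.update x i b := by
  rw [flipBit, Bool.eq_not_of_ne (Ne.symm h)]

theorem hammingDist_update_of_ne {ι β : Type*} [Fintype ι] [DecidableEq ι] [DecidableEq β]
    {x y : ι → β} {m : ι} (h : x m ≠ y m) :
    hammingDist (Function.update x m (y m)) y + 1 = hammingDist x y := by
  have hdiff : (Finset.univ.filter fun i => Function.update x m (y m) i ≠ y i)
      = (Finset.univ.filter fun i => x i ≠ y i).erase m := by
    ext i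
    by_cases him : i = m <;> simp [Function.update_apply, him]
  rw [hammingDist, hammingDist, hdiff, Finset.card_erase_add_one (by simpa using h)]

def IsAscent (f : (Fin n → Bool) → ℤ) (p : ℕ → Fin n → Bool) (T : ℕ) : Prop :=
  ∀ t < T, (∃ i, p (t + 1) = flipBit (p t) i) ∧ f (p t) < f (p (t + 1))

theorem IsAscent.cons {f : (Fin n → Bool) → ℤ} {p : ℕ → Fin n → Bool} {T : ℕ}
    (hp : IsAscent f p T) {x : Fin n → Bool} {i : Fin n} (hflip : p 0 = flipBit x i)
    (hlt : f x < f (p 0)) :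
    IsAscent f (fun | 0 => x | t + 1 => p t) (T + 1) := by
  rintro (_ | t) ht
  · exact ⟨⟨i, hflip⟩, hlt⟩
  · exact hp t (by omega)

theorem exists_minimal_ne_of_ne {ι β : Type*} {r : ι → ι → Prop} (hwf : WellFounded r)
    {x xs : ι → β} (hne : x ≠ xs) :
    ∃ m, x m ≠ xs m ∧ ∀ i, r i m → x i = xs i := by
  obtain ⟨m, hm, hmin⟩ := hwf.has_min {i | x i ≠ xs i} (Function.ne_iff.mp hne)
  exact ⟨m, hm, fun i hi => by_contra fun hne' => hmin i hne' hi⟩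

theorem PrecSmooth.lt_update {r : Fin n → Fin n → Prop} {f : (Fin n → Bool) → ℤ}
    {xs : Fin n → Bool} (hs : PrecSmooth r f xs) {x : Fin n → Bool} {m : Fin n}
    (hm : x m ≠ xs m) (hbelow : ∀ i, r i m → x i = xs i) :
    f x < f (Function.update x m (xs m)) := by
  have hsmooth := hs m x hbelow
  rwa [← Bool.eq_not_of_ne hm, Function.update_eq_self] at hsmooth

theorem PrecSmooth.exists_ascent {r : Fin n → Fin n → Prop} {f : (Fin n → Bool) → ℤ}
    {xs : Fin n → Bool} (hs : PrecSmooth r f xs) (hwf : WellFounded r) (x : Fin n → Bool) :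
    ∃ p : ℕ → Fin n → Bool,
      p 0 = x ∧ p (hammingDist x xs) = xs ∧ IsAscent f p (hammingDist x xs) := by
  induction hd : hammingDist x xs generalizing x with
  | zero => exact ⟨fun _ => xs, (hammingDist_eq_zero.mp hd).symm, rfl, by simp [IsAscent]⟩
  | succ d ih =>
    obtain ⟨m, hm, hbelow⟩ := exists_minimal_ne_of_ne hwf 
      (hammingDist_pos.mp (by omega : 0 < hammingDist x xs))
    have hd' : hammingDist (Function.update x m (xs m)) xs = d := by
      have := hammingDist_update_of_ne hm
      omega
    obtain ⟨p, hp0, hpd, hp⟩ := ih _ hd'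
    exact ⟨_, rfl, hpd, hp.cons (hp0.trans (flipBit_eq_update_of_ne hm).symm)
      (hp0 ▸ hs.lt_update hm hbelow)⟩

/-- In a `≺`-smooth fitness landscape with optimum `xs`, from any initial
assignment `x0` there is a strictly fitness-increasing sequence of single-bit
flips from `x0` to `xs` whose length is the Hamming distance between `x0` and
`xs` (in particular, at most `n`). -/
theorem precSmooth_direct_ascent
    (f : (Fin n → Bool) → ℤ) (r : Fin n → Fin n → Prop)
    (hr : IsStrictOrder (Fin n) r) (xs : Fin n → Bool)
    (hs : PrecSmooth r f xs) (x0 : Fin n → Bool) :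
    hamDist x0 xs ≤ n ∧
    ∃ p : ℕ → (Fin n → Bool),
      p 0 = x0 ∧ p (hamDist x0 xs) = xs ∧
      ∀ t < hamDist x0 xs,
        (∃ i, p (t + 1) = flipBit (p t) i) ∧ f (p t) < f (p (t + 1)) := by
  have hwf : WellFounded r := Finite.wellFounded_of_trans_of_irrefl r
  rw [hamDist_eq_hammingDist]
  exact ⟨(hammingDist_le_card_fintype).trans_eq (Fintype.card_fin n), hs.exists_ascent hwf x0⟩
end

section
/- A quadratic pseudo-Boolean function given by a binary Boolean VCSP instance implements a smooth fitness landscape if and only if for every variable index i: |c_i| > Σ_{j ∈ N(i), sgn(c_{ij}) ≠ sgn(c_i)} |c_{ij}|, where the sum ranges over neighbours whose binary constraint weight has sign opposite to c_i (assuming c_i ≠ 0 for all i). -/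
/-- A binary Boolean VCSP instance: unary weights `c` and symmetric binary
weights `w` (with `w i j = 0` when `{i,j}` is not an edge). -/
structure VCSP (n : ℕ) where
  c : Fin n → ℤ
  w : Fin n → Fin n → ℤ
  symm : ∀ i j, w i j = w j i
  diag : ∀ i, w i i = 0

variable {n : ℕ}

/-- Boolean as a 0/1 integer. -/
def bv (b : Bool) : ℤ := if b then 1 else 0

/-- The quadratic pseudo-Boolean fitness function implemented by the instance. -/
def VCSP.fit (C : VCSP n) (x : Fin n → Bool) : ℤ :=
  ∑ i, C.c i * bv (x i) +
    ∑ i, ∑ j, if i < j then C.w i j * bv (x i) * bv (x j) else 0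

/-- The effective unary `ĉ_i(x, S)`. -/
def VCSP.effU (C : VCSP n) (i : Fin n) (x : Fin n → Bool) (S : Finset (Fin n)) : ℤ :=
  C.c i + ∑ j ∈ Finset.univ \ S, bv (x j) * C.w i j

/-- Local field. -/
def VCSP.L (C : VCSP n) (i : Fin n) (x : Fin n → Bool) : ℤ :=
  C.c i + ∑ j, C.w i j * bv (x j)

lemma key (C : VCSP n) (i : Fin n) (x : Fin n → Bool) :
    C.fit (Function.update x i true) - C.fit (Function.update x i false) = C.L i x := by
  classical
  set y1 := Function.update x i true with hy1def
  set y0 := Function.update x i false with hy0def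
  have hy1 : ∀ k, k ≠ i → y1 k = x k := fun k hk => Function.update_of_ne hk _ _
  have hy0 : ∀ k, k ≠ i → y0 k = x k := fun k hk => Function.update_of_ne hk _ _
  have hy1i : y1 i = true := Function.update_self _ _ _
  have hy0i : y0 i = false := Function.update_self _ _ _
  unfold VCSP.fit VCSP.L
  have hU : (∑ k, C.c k * bv (y1 k)) - (∑ k, C.c k * bv (y0 k)) = C.c i := by
    rw [← Finset.sum_sub_distrib]
    rw [Finset.sum_eq_single i]
    · rw [hy1i, hy0i]; simp [bv]
    · intro k _ hk; rw [hy1 k hk, hy0 k hk]; ring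
    · simp
  have hB : (∑ p, ∑ q, if p < q then C.w p q * bv (y1 p) * bv (y1 q) else 0)
      - (∑ p, ∑ q, if p < q then C.w p q * bv (y0 p) * bv (y0 q) else 0)
      = ∑ j, C.w i j * bv (x j) := by
    rw [← Finset.sum_sub_distrib]
    have hrow : ∀ p : Fin n,
        (∑ q, if p < q then C.w p q * bv (y1 p) * bv (y1 q) else 0)
          - (∑ q, if p < q then C.w p q * bv (y0 p) * bv (y0 q) else 0)
        = ∑ q, ((if p < q then C.w p q * bv (y1 p) * bv (y1 q) else 0)
          - (if p < q then C.w p q * bv (y0 p) * bv (y0 q) else 0)) := by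
      intro p; rw [← Finset.sum_sub_distrib]
    simp only [hrow]
    have hrowi : (∑ q, ((if i < q then C.w i q * bv (y1 i) * bv (y1 q) else 0)
          - (if i < q then C.w i q * bv (y0 i) * bv (y0 q) else 0)))
        = ∑ q, (if i < q then C.w i q * bv (x q) else 0) := by
      apply Finset.sum_congr rfl
      intro q _
      by_cases hq : q = i
      · subst hq; simp
      · rw [hy1 q hq, hy0 q hq, hy1i, hy0i]
        by_cases hiq : i < q
        · simp [hiq, bv]
        · simp [hiq]
    have hrowp : ∀ p : Fin n, p ≠ i →
        (∑ q, ((if p < q then C.w p q * bv (y1 p) * bv (y1 q) else 0)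
          - (if p < q then C.w p q * bv (y0 p) * bv (y0 q) else 0)))
        = (if p < i then C.w p i * bv (x p) else 0) := by
      intro p hpi
      rw [Finset.sum_eq_single i]
      · rw [hy1 p hpi, hy0 p hpi, hy1i, hy0i]
        by_cases hlt : p < i
        · simp [hlt, bv]
        · simp [hlt]
      · intro q _ hq
        rw [hy1 q hq, hy0 q hq, hy1 p hpi, hy0 p hpi]; ring
      · simp
    rw [Finset.sum_eq_add_sum_sdiff_singleton_of_mem (Finset.mem_univ i)]
    rw [hrowi]
    have h2 : (∑ p ∈ Finset.univ \ {i},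
        (∑ q, ((if p < q then C.w p q * bv (y1 p) * bv (y1 q) else 0)
          - (if p < q then C.w p q * bv (y0 p) * bv (y0 q) else 0))))
        = ∑ p, (if p < i then C.w p i * bv (x p) else 0) := by
      rw [Finset.sum_congr rfl (fun p hp => hrowp p (by
        rcases Finset.mem_sdiff.mp hp with ⟨_, h2⟩; simpa using h2))]
      apply Finset.sum_subset (Finset.sdiff_subset)
      intro p _ hp
      have hpi : p = i := by
        by_contra hne
        exact hp (Finset.mem_sdiff.mpr ⟨Finset.mem_univ p, by simpa using hne⟩)
      subst hpi
      simp
    rw [h2, ← Finset.sum_add_distrib]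
    apply Finset.sum_congr rfl
    intro j _
    by_cases hj : j = i
    · subst hj; simp [C.diag]
    · rcases lt_or_gt_of_ne (fun h : i = j => hj h.symm) with h | h
      · have h2 : ¬ j < i := by omega
        simp [h, h2]
      · have h2 : ¬ i < j := by omega
        simp [h, h2, C.symm i j]
  omega

lemma L_lower (C : VCSP n) (i : Fin n) (x : Fin n → Bool) :
    C.c i + ∑ j, min (C.w i j) 0 ≤ C.L i x := by
  unfold VCSP.L
  have : ∑ j, min (C.w i j) 0 ≤ ∑ j, C.w i j * bv (x j) := by
    apply Finset.sum_le_sum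
    intro j _
    cases hxj : x j <;> simp [hxj, bv] <;> omega
  omega

lemma L_upper (C : VCSP n) (i : Fin n) (x : Fin n → Bool) :
    C.L i x ≤ C.c i + ∑ j, max (C.w i j) 0 := by
  unfold VCSP.L
  have : ∑ j, C.w i j * bv (x j) ≤ ∑ j, max (C.w i j) 0 := by
    apply Finset.sum_le_sum
    intro j _
    cases hxj : x j <;> simp [hxj, bv] <;> omega
  omega

lemma L_at_neg (C : VCSP n) (i : Fin n) :
    C.L i (fun j => decide (C.w i j < 0)) = C.c i + ∑ j, min (C.w i j) 0 := by
  unfold VCSP.L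
  congr 1
  apply Finset.sum_congr rfl
  intro j _
  by_cases h : C.w i j < 0 <;> simp [bv, h] <;> omega

lemma L_at_pos (C : VCSP n) (i : Fin n) :
    C.L i (fun j => decide (0 < C.w i j)) = C.c i + ∑ j, max (C.w i j) 0 := by
  unfold VCSP.L
  congr 1
  apply Finset.sum_congr rfl
  intro j _
  by_cases h : 0 < C.w i j <;> simp [bv, h] <;> omega

/-- A binary Boolean VCSP implements a smooth fitness landscape iff for every
variable `i` the magnitude of its unary weight exceeds the total magnitude of
the binary weights of opposite sign incident on `i` (assuming `c i ≠ 0`). -/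
theorem vcsp_smooth_iff (C : VCSP n) (hc : ∀ i, C.c i ≠ 0) :
    (∀ i : Fin n, ∃ b : Bool, ∀ x : Fin n → Bool,
        C.fit (Function.update x i b) > C.fit (Function.update x i (!b))) ↔
    (∀ i : Fin n,
      |C.c i| > ∑ j ∈ Finset.univ.filter
          (fun j => C.w i j ≠ 0 ∧ Int.sign (C.w i j) ≠ Int.sign (C.c i)),
        |C.w i j|) := by
  classical
  have hsm : ∀ i : Fin n,
      (∃ b : Bool, ∀ x : Fin n → Bool,
        C.fit (Function.update x i b) > C.fit (Function.update x i (!b)))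
      ↔ ((∀ x, 0 < C.L i x) ∨ (∀ x, C.L i x < 0)) := by
    intro i
    constructor
    · rintro ⟨b, hb⟩
      cases b
      · right; intro x
        have h1 : C.fit (Function.update x i false) > C.fit (Function.update x i true) := hb x
        have hk := key C i x; omega
      · left; intro x
        have h1 : C.fit (Function.update x i true) > C.fit (Function.update x i false) := hb x
        have hk := key C i x; omega
    · rintro (h | h)
      · exact ⟨true, fun x => by
          show C.fit (Function.update x i true) > C.fit (Function.update x i false)
          have := h x; have hk := key C i x; omega⟩
      · exact ⟨false, fun x => by
          show C.fit (Function.update x i false) > C.fit (Function.update x i true)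
          have := h x; have hk := key C i x; omega⟩
  have hposfilter : ∀ i : Fin n, 0 < C.c i →
      (Finset.univ.filter
          (fun j => C.w i j ≠ 0 ∧ Int.sign (C.w i j) ≠ Int.sign (C.c i)))
        = Finset.univ.filter (fun j => C.w i j < 0) := by
    intro i hi
    apply Finset.filter_congr
    intro j _
    rw [Int.sign_eq_one_of_pos hi]
    constructor
    · rintro ⟨h0, hs⟩
      rcases lt_trichotomy (C.w i j) 0 with h | h | h
      · exact h
      · exact absurd h h0
      · exact absurd (Int.sign_eq_one_of_pos h) hs
    · intro h
      exact ⟨by omega, by rw [Int.sign_eq_neg_one_of_neg h]; decide⟩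
  have hnegfilter : ∀ i : Fin n, C.c i < 0 →
      (Finset.univ.filter
          (fun j => C.w i j ≠ 0 ∧ Int.sign (C.w i j) ≠ Int.sign (C.c i)))
        = Finset.univ.filter (fun j => 0 < C.w i j) := by
    intro i hi
    apply Finset.filter_congr
    intro j _
    rw [Int.sign_eq_neg_one_of_neg hi]
    constructor
    · rintro ⟨h0, hs⟩
      rcases lt_trichotomy (C.w i j) 0 with h | h | h
      · exact absurd (Int.sign_eq_neg_one_of_neg h) hs
      · exact absurd h h0
      · exact h
    · intro h
      exact ⟨by omega, by rw [Int.sign_eq_one_of_pos h]; decide⟩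
  have hminsum : ∀ i : Fin n,
      ∑ j, min (C.w i j) 0 = -∑ j ∈ Finset.univ.filter (fun j => C.w i j < 0), |C.w i j| := by
    intro i
    rw [Finset.sum_filter, ← Finset.sum_neg_distrib]
    apply Finset.sum_congr rfl
    intro j _
    by_cases h : C.w i j < 0
    · rw [if_pos h, abs_of_neg h]; omega
    · rw [if_neg h]; omega
  have hmaxsum : ∀ i : Fin n,
      ∑ j, max (C.w i j) 0 = ∑ j ∈ Finset.univ.filter (fun j => 0 < C.w i j), |C.w i j| := by
    intro i
    rw [Finset.sum_filter]
    apply Finset.sum_congr rfl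
    intro j _
    by_cases h : 0 < C.w i j
    · rw [if_pos h, abs_of_pos h]; omega
    · rw [if_neg h]; omega
  constructor
  · intro h i
    have hs := (hsm i).mp (h i)
    rcases (hc i).lt_or_gt with hci | hci
    · rw [hnegfilter i hci, abs_of_neg hci]
      have h2 : C.L i (fun j => decide (0 < C.w i j)) < 0 := by
        rcases hs with h1 | h1
        · exfalso
          have := h1 (fun j => decide (C.w i j < 0))
          rw [L_at_neg] at this
          have hm : ∑ j, min (C.w i j) 0 ≤ 0 :=
            Finset.sum_nonpos (fun j _ => min_le_right _ _)
          omega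
        · exact h1 _
      rw [L_at_pos, hmaxsum i] at h2
      omega
    · rw [hposfilter i hci, abs_of_pos hci]
      have h2 : 0 < C.L i (fun j => decide (C.w i j < 0)) := by
        rcases hs with h1 | h1
        · exact h1 _
        · exfalso
          have := h1 (fun j => decide (0 < C.w i j))
          rw [L_at_pos] at this
          have hm : 0 ≤ ∑ j, max (C.w i j) 0 :=
            Finset.sum_nonneg (fun j _ => le_max_right _ _)
          omega
      rw [L_at_neg, hminsum i] at h2
      omega
  · intro h i
    apply (hsm i).mpr
    rcases (hc i).lt_or_gt with hci | hci
    · right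
      intro x
      have hb := L_upper C i x
      have := h i
      rw [hnegfilter i hci, abs_of_neg hci] at this
      have hms := hmaxsum i
      omega
    · left
      intro x
      have hb := L_lower C i x
      have := h i
      rw [hposfilter i hci, abs_of_pos hci] at this
      have hms := hminsum i
      omega
end

section
/- In a binary Boolean VCSP instance, if i and j have no common neighbour (N(i) ∩ N(j) = ∅) and there are assignments x, y witnessing that j sign-depends on i and i sign-depends on j respectively, then there is a single assignment z witnessing both simultaneously (i.e., the edge {i,j} is bidirected). -/
variable {n : ℕ}

/-- The edge `{i,j}` is bidirected: one assignment simultaneously witnesses the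
sign/magnitude conditions for both `i` and `j`. -/
def Bidir (C : VCSP n) (i j : Fin n) : Prop :=
  ∃ z : Fin n → Bool,
    (|C.w i j| > |C.effU i z {i, j}| ∧
      Int.sign (C.w i j) ≠ Int.sign (C.effU i z {i, j})) ∧
    (|C.w i j| > |C.effU j z {i, j}| ∧
      Int.sign (C.w i j) ≠ Int.sign (C.effU j z {i, j}))

/-- If `i` and `j` have no common neighbour and `x`, `y` witness that `j`
sign-depends on `i` and `i` sign-depends on `j` respectively, then a single
assignment witnesses both simultaneously: the edge `{i,j}` is bidirected. -/
theorem no_common_neighbour_bidirected (C : VCSP n) (i j : Fin n)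
    (hN : ∀ k, ¬ (C.w i k ≠ 0 ∧ C.w j k ≠ 0))
    (x : Fin n → Bool)
    (hx : |C.w i j| > |C.effU i x {i, j}| ∧
      Int.sign (C.w i j) ≠ Int.sign (C.effU i x {i, j}))
    (y : Fin n → Bool)
    (hy : |C.w i j| > |C.effU j y {i, j}| ∧
      Int.sign (C.w i j) ≠ Int.sign (C.effU j y {i, j})) :
    Bidir C i j := by
  refine ⟨fun k => if C.w i k = 0 then y k else x k, ?_, ?_⟩
  · have h : C.effU i (fun k => if C.w i k = 0 then y k else x k) {i, j}
        = C.effU i x {i, j} := by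
      unfold VCSP.effU
      congr 1
      refine Finset.sum_congr rfl fun k _ => ?_
      by_cases h0 : C.w i k = 0
      · simp [h0]
      · simp [h0]
    rw [h]; exact hx
  · have h : C.effU j (fun k => if C.w i k = 0 then y k else x k) {i, j}
        = C.effU j y {i, j} := by
      unfold VCSP.effU
      congr 1
      refine Finset.sum_congr rfl fun k _ => ?_
      by_cases h0 : C.w j k = 0
      · simp [h0]
      · have : C.w i k = 0 := by
          by_contra hik
          exact hN k ⟨hik, h0⟩
        simp [this]
    rw [h]; exact hy
end

section
/- Every Matoušek AUSO is <-smooth for the natural total order on Fin n: for all k and all prefixes y ∈ {0,1}^{k−1}, there is a preferred bit b such that for all suffixes z, f(y b z) > f(y b̄ z). -/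
variable {n : ℕ}

/-- Parity (as 0 or 1) of the number of `true` coordinates of `x` in scope `s`. -/
def par (s : Finset (Fin n)) (x : Fin n → Bool) : ℕ :=
  (s.filter fun j => x j = true).card % 2

/-- The fitness function of a Matoušek AUSO with parity scopes `R`:
`f(x) = -Σ_i 2^(n-i) P_i(x[R_i])` (indices `i : Fin n` correspond to `i+1`). -/
def matF (R : Fin n → Finset (Fin n)) (x : Fin n → Bool) : ℤ :=
  - ∑ i : Fin n, (2 : ℤ) ^ (n - 1 - (i : ℕ)) * (par (R i) x : ℤ)

lemma par_congr (s : Finset (Fin n)) {x y : Fin n → Bool} (h : ∀ j ∈ s, x j = y j) :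
    par s x = par s y := by
  unfold par
  have hf : Finset.filter (fun j => x j = true) s = Finset.filter (fun j => y j = true) s := by
    apply Finset.filter_congr
    intro j hj
    simp [h j hj]
  rw [hf]

lemma par_le_one (s : Finset (Fin n)) (x : Fin n → Bool) : par s x ≤ 1 :=
  Nat.lt_succ_iff.mp (Nat.mod_lt _ (by norm_num))

lemma geo (m : ℕ) : ∑ j ∈ Finset.range m, (2:ℤ)^j = 2^m - 1 := by
  induction m with
  | zero => simp
  | succ m ih => rw [Finset.sum_range_succ, ih]; ring

lemma par_update_k (R : Fin n → Finset (Fin n)) (hmem : ∀ i, i ∈ R i)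
    (k : Fin n) (x : Fin n → Bool) (c : Bool) :
    par (R k) (Function.update x k c) =
      ((((R k).erase k).filter fun j => x j = true).card + c.toNat) % 2 := by
  unfold par
  congr 1
  rw [← Finset.insert_erase (hmem k), Finset.filter_insert]
  have herase : ((R k).erase k).filter (fun j => Function.update x k c j = true)
      = ((R k).erase k).filter (fun j => x j = true) := by
    apply Finset.filter_congr
    intro j hj
    rw [Function.update_of_ne (Finset.ne_of_mem_erase hj)]
  have hknot : k ∉ ((R k).erase k).filter (fun j => x j = true) :=
    fun h => (Finset.mem_erase.mp (Finset.mem_filter.mp h).1).1 rfl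
  cases c <;> simp [herase, Finset.card_insert_of_notMem hknot]

lemma sum_Ioi_pow (k : Fin n) :
    ∑ i ∈ Finset.Ioi k, (2:ℤ) ^ (n - 1 - (i : ℕ)) = 2 ^ (n - 1 - (k : ℕ)) - 1 := by
  have hn : 0 < n := k.pos
  rw [← geo]
  refine Finset.sum_nbij' (fun i => n - 1 - (i : ℕ))
    (fun j => (⟨n - 1 - j, by omega⟩ : Fin n)) ?_ ?_ ?_ ?_ ?_
  · intro i hi
    have h1 := i.isLt
    have hk : (k : ℕ) < (i : ℕ) := Fin.lt_def.mp (Finset.mem_Ioi.mp hi)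
    simp only [Finset.mem_range]
    omega
  · intro j hj
    simp only [Finset.mem_range] at hj
    have hkn := k.isLt
    simp only [Finset.mem_Ioi, Fin.lt_def]
    omega
  · intro i hi
    have h1 := i.isLt
    have hk : (k : ℕ) < (i : ℕ) := Fin.lt_def.mp (Finset.mem_Ioi.mp hi)
    ext
    simp
    omega
  · intro j hj
    simp only [Finset.mem_range] at hj
    simp
    omega
  · intro i hi
    rfl

/-- Every Matoušek AUSO is `<`-smooth for the natural order on `Fin n`: for
each `k` and each prefix `y` there is a preferred bit `b` such that for every
assignment agreeing with `y` below `k`, setting bit `k` to `b` is strictly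
better than setting it to `¬b`. -/
theorem matousek_lt_smooth (R : Fin n → Finset (Fin n))
    (hmem : ∀ i, i ∈ R i) (hscope : ∀ i, ∀ j ∈ R i, j ≤ i)
    (k : Fin n) (y : Fin n → Bool) :
    ∃ b : Bool, ∀ x : Fin n → Bool, (∀ j, j < k → x j = y j) →
      matF R (Function.update x k b) > matF R (Function.update x k (!b)) := by
  set c0 := (((R k).erase k).filter fun j => y j = true).card with hc0
  refine ⟨decide (c0 % 2 = 1), ?_⟩
  intro x hx
  set b := decide (c0 % 2 = 1) with hb
  -- erase-filter cards agree between x and y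
  have hfil : (((R k).erase k).filter fun j => x j = true)
      = (((R k).erase k).filter fun j => y j = true) := by
    apply Finset.filter_congr
    intro j hj
    have hjk : j < k := lt_of_le_of_ne (hscope k j (Finset.mem_of_mem_erase hj))
      (Finset.ne_of_mem_erase hj)
    rw [hx j hjk]
  have hpb : par (R k) (Function.update x k b) = 0 := by
    rw [par_update_k R hmem, hfil, ← hc0, hb]
    rcases Nat.mod_two_eq_zero_or_one c0 with h | h <;> simp [h] <;> try omega
  have hpnb : par (R k) (Function.update x k (!b)) = 1 := by
    rw [par_update_k R hmem, hfil, ← hc0, hb]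
    rcases Nat.mod_two_eq_zero_or_one c0 with h | h <;> simp [h] <;> try omega
  -- the difference function
  set g : Fin n → ℤ := fun i =>
    (2:ℤ) ^ (n - 1 - (i : ℕ)) *
      ((par (R i) (Function.update x k (!b)) : ℤ) - (par (R i) (Function.update x k b) : ℤ))
    with hg
  have key : ∑ i : Fin n, g i > 0 := by
    have hzero : ∀ i : Fin n, i < k → g i = 0 := by
      intro i hik
      have hpar : par (R i) (Function.update x k (!b)) = par (R i) (Function.update x k b) := by
        apply par_congr
        intro j hj
        have hjne : j ≠ k := by
          intro h; subst h
          exact absurd (lt_of_le_of_lt (hscope i j hj) hik) (lt_irrefl _)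
        rw [Function.update_of_ne hjne, Function.update_of_ne hjne]
      rw [hg]; simp [hpar]
    have hsum1 : ∑ i : Fin n, g i = ∑ i ∈ Finset.Ici k, g i := by
      refine (Finset.sum_subset (Finset.subset_univ _) ?_).symm
      intro i _ hi
      exact hzero i (by simpa using hi)
    have hsum2 : ∑ i ∈ Finset.Ici k, g i = g k + ∑ i ∈ Finset.Ioi k, g i := by
      rw [← Finset.Ioi_insert k, Finset.sum_insert (by simp)]
    have hgk : g k = 2 ^ (n - 1 - (k : ℕ)) := by
      rw [hg]; simp [hpb, hpnb]
    have hbound : ∀ i ∈ Finset.Ioi k, -(2:ℤ) ^ (n - 1 - (i : ℕ)) ≤ g i := by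
      intro i _
      rw [hg]
      simp only
      have h1 : ((par (R i) (Function.update x k b) : ℤ)) ≤ 1 := by
        exact_mod_cast par_le_one _ _
      have h2 : (0:ℤ) ≤ (par (R i) (Function.update x k (!b)) : ℤ) := Int.natCast_nonneg _
      nlinarith [pow_pos (by norm_num : (0:ℤ) < 2) (n - 1 - (i : ℕ))]
    have hsum3 : ∑ i ∈ Finset.Ioi k, g i ≥ -(2 ^ (n - 1 - (k : ℕ)) - 1) := by
      calc ∑ i ∈ Finset.Ioi k, g i ≥ ∑ i ∈ Finset.Ioi k, (-(2:ℤ) ^ (n - 1 - (i : ℕ))) :=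
            Finset.sum_le_sum hbound
        _ = -(∑ i ∈ Finset.Ioi k, (2:ℤ) ^ (n - 1 - (i : ℕ))) := by rw [Finset.sum_neg_distrib]
        _ = -(2 ^ (n - 1 - (k : ℕ)) - 1) := by rw [sum_Ioi_pow]
    rw [hsum1, hsum2, hgk]
    linarith
  unfold matF
  have : ∑ i : Fin n, g i =
      (∑ i : Fin n, (2:ℤ) ^ (n - 1 - (i : ℕ)) * (par (R i) (Function.update x k (!b)) : ℤ))
      - (∑ i : Fin n, (2:ℤ) ^ (n - 1 - (i : ℕ)) * (par (R i) (Function.update x k b) : ℤ)) := by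
    rw [← Finset.sum_sub_distrib]
    apply Finset.sum_congr rfl
    intro i _
    rw [hg]; ring
  linarith [key, this.symm ▸ key]
end

section
/- Matoušek AUSOs are semismooth: the restriction of a Matoušek AUSO to every subcube of the hypercube has a unique local peak. -/
variable {n : ℕ}

lemma par_lt_two (s : Finset (Fin n)) (x : Fin n → Bool) : par s x < 2 :=
  Nat.mod_lt _ two_pos

lemma par_split (s : Finset (Fin n)) (x : Fin n → Bool) (i : Fin n) (hi : i ∈ s) :
    par s x = ((if x i = true then 1 else 0) +
      ((s.erase i).filter fun j => x j = true).card) % 2 := by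
  unfold par
  rw [Finset.card_filter, Finset.card_filter, ← Finset.add_sum_erase s _ hi]

lemma filter_erase_flip (s : Finset (Fin n)) (x : Fin n → Bool) (i : Fin n) :
    ((s.erase i).filter fun j => flipBit x i j = true)
      = ((s.erase i).filter fun j => x j = true) := by
  apply Finset.filter_congr
  intro j hj
  simp [flipBit, Function.update_of_ne (Finset.ne_of_mem_erase hj)]

lemma par_flip_mem (s : Finset (Fin n)) (x : Fin n → Bool) (i : Fin n) (hi : i ∈ s) :
    par s (flipBit x i) + par s x = 1 := by
  rw [par_split s x i hi, par_split s (flipBit x i) i hi, filter_erase_flip]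
  have : flipBit x i i = !(x i) := by simp [flipBit]
  rw [this]
  set c := ((s.erase i).filter fun j => x j = true).card
  cases hx : x i <;> simp <;> omega

lemma par_flip_notMem (s : Finset (Fin n)) (x : Fin n → Bool) (i : Fin n) (hi : i ∉ s) :
    par s (flipBit x i) = par s x := by
  unfold par
  congr 1
  apply congrArg
  apply Finset.filter_congr
  intro j hj
  have : j ≠ i := fun h => hi (h ▸ hj)
  simp [flipBit, Function.update_of_ne this]

lemma sum_pow_lt (s : Finset (Fin n)) (i : Fin n) (h : ∀ j ∈ s, i < j) :
    (∑ j ∈ s, (2:ℤ) ^ (n - 1 - (j:ℕ))) < 2 ^ (n - 1 - (i:ℕ)) := by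
  have hinj : ∀ x ∈ s, ∀ y ∈ s, n - 1 - (x:ℕ) = n - 1 - (y:ℕ) → x = y := by
    intro x hx y hy hxy
    have := x.isLt; have := y.isLt
    exact Fin.ext (by omega)
  calc (∑ j ∈ s, (2:ℤ) ^ (n - 1 - (j:ℕ)))
      = ∑ k ∈ s.image (fun j : Fin n => n - 1 - (j:ℕ)), (2:ℤ) ^ k := by
        rw [Finset.sum_image hinj]
    _ ≤ ∑ k ∈ Finset.range (n - 1 - (i:ℕ)), (2:ℤ) ^ k := by
        apply Finset.sum_le_sum_of_subset_of_nonneg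
        · intro k hk
          simp only [Finset.mem_image] at hk
          obtain ⟨j, hj, rfl⟩ := hk
          have hij := h j hj
          have := j.isLt
          simp only [Finset.mem_range]
          have : (i:ℕ) < (j:ℕ) := hij
          omega
        · intro k _ _; positivity
    _ = 2 ^ (n - 1 - (i:ℕ)) - 1 := by
        induction (n - 1 - (i:ℕ)) with
        | zero => simp
        | succ m ih => rw [Finset.sum_range_succ, ih]; ring
    _ < 2 ^ (n - 1 - (i:ℕ)) := by omega

lemma flip_le_iff (R : Fin n → Finset (Fin n))
    (hmem : ∀ i, i ∈ R i) (hscope : ∀ i, ∀ j ∈ R i, j ≤ i) (x : Fin n → Bool) (i : Fin n) :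
    matF R (flipBit x i) ≤ matF R x ↔ par (R i) x = 0 := by
  classical
  set T : Finset (Fin n) := Finset.univ.filter (fun j => i ∈ R j) with hT
  set g : Fin n → ℤ := fun j => (2:ℤ) ^ (n - 1 - (j:ℕ)) * (1 - 2 * (par (R j) x : ℤ)) with hg
  have key : matF R x - matF R (flipBit x i) = ∑ j ∈ T, g j := by
    have step1 : matF R x - matF R (flipBit x i)
        = ∑ j : Fin n, ((2:ℤ) ^ (n - 1 - (j:ℕ)) * (par (R j) (flipBit x i) : ℤ)
            - (2:ℤ) ^ (n - 1 - (j:ℕ)) * (par (R j) x : ℤ)) := by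
      unfold matF
      rw [neg_sub_neg, Finset.sum_sub_distrib]
    rw [step1]
    have step2 : ∀ j : Fin n,
        ((2:ℤ) ^ (n - 1 - (j:ℕ)) * (par (R j) (flipBit x i) : ℤ)
          - (2:ℤ) ^ (n - 1 - (j:ℕ)) * (par (R j) x : ℤ))
        = if i ∈ R j then g j else 0 := by
      intro j
      by_cases hij : i ∈ R j
      · have := par_flip_mem (R j) x i hij
        have hcast : (par (R j) (flipBit x i) : ℤ) = 1 - (par (R j) x : ℤ) := by
          have : ((par (R j) (flipBit x i) + par (R j) x : ℕ) : ℤ) = 1 := by rw [this]; norm_num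
          push_cast at this; linarith
        simp only [hij, if_true, hg, hcast]; ring
      · rw [par_flip_notMem (R j) x i hij]
        simp [hij]
    rw [Finset.sum_congr rfl (fun j _ => step2 j), ← Finset.sum_filter]
  have hiT : i ∈ T := by simp [hT, hmem i]
  have hlt : ∀ j ∈ T.erase i, i < j := by
    intro j hj
    have hne := Finset.ne_of_mem_erase hj
    have hjT := Finset.mem_of_mem_erase hj
    simp only [hT, Finset.mem_filter] at hjT
    exact lt_of_le_of_ne (hscope j i hjT.2) (Ne.symm hne)
  have habs : |∑ j ∈ T.erase i, g j| < 2 ^ (n - 1 - (i:ℕ)) := by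
    calc |∑ j ∈ T.erase i, g j| ≤ ∑ j ∈ T.erase i, |g j| :=
          Finset.abs_sum_le_sum_abs _ _
      _ = ∑ j ∈ T.erase i, (2:ℤ) ^ (n - 1 - (j:ℕ)) := by
          apply Finset.sum_congr rfl
          intro j _
          have hp := par_lt_two (R j) x
          have : par (R j) x = 0 ∨ par (R j) x = 1 := by omega
          rcases this with h | h <;> simp [hg, h, abs_mul, abs_of_nonneg, pow_nonneg]
      _ < 2 ^ (n - 1 - (i:ℕ)) := sum_pow_lt _ i hlt
  rw [abs_lt] at habs
  have hp := par_lt_two (R i) x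
  constructor
  · intro h
    by_contra hne
    have hp1 : par (R i) x = 1 := by omega
    have h0 : (0:ℤ) ≤ matF R x - matF R (flipBit x i) := sub_nonneg.2 h
    rw [key, ← Finset.add_sum_erase T g hiT] at h0
    simp only [hg, hp1] at h0
    push_cast at h0
    linarith
  · intro h
    have h0 : (0:ℤ) ≤ matF R x - matF R (flipBit x i) := by
      rw [key, ← Finset.add_sum_erase T g hiT]
      simp only [hg, h]
      push_cast
      linarith
    linarith [sub_nonneg.1 h0]
def peak (R : Fin n → Finset (Fin n)) (hs : ∀ i, ∀ j ∈ R i, j ≤ i)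
    (S : Finset (Fin n)) (b : Fin n → Bool) : Fin n → Bool := fun i =>
  if i ∈ S then
    decide ((((R i).erase i).attach.filter
      (fun j => peak R hs S b j.1 = true)).card % 2 = 1)
  else b i
termination_by i => i.val
decreasing_by
  all_goals first
    | exact Fin.lt_def.mp (lt_of_le_of_ne (hs _ _ (Finset.mem_of_mem_erase a.2))
        (Finset.ne_of_mem_erase a.2))
    | exact Fin.lt_def.mp (lt_of_le_of_ne (hs _ _ (Finset.mem_of_mem_erase j.2))
        (Finset.ne_of_mem_erase j.2))

lemma card_attach_filter (s : Finset (Fin n)) (p : Fin n → Prop) [DecidablePred p] :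
    (s.attach.filter fun j => p j.1).card = (s.filter p).card := by
  rw [Finset.filter_attach, Finset.card_map, Finset.card_attach]

lemma peak_notMem (R : Fin n → Finset (Fin n)) (hs : ∀ i, ∀ j ∈ R i, j ≤ i)
    (S : Finset (Fin n)) (b : Fin n → Bool) (i : Fin n) (hi : i ∉ S) :
    peak R hs S b i = b i := by
  unfold peak; simp [hi]

lemma peak_spec (R : Fin n → Finset (Fin n)) (hmem : ∀ i, i ∈ R i)
    (hs : ∀ i, ∀ j ∈ R i, j ≤ i) (S : Finset (Fin n)) (b : Fin n → Bool)
    (i : Fin n) (hi : i ∈ S) : par (R i) (peak R hs S b) = 0 := by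
  rw [par_split (R i) _ i (hmem i)]
  have hpi : peak R hs S b i = decide ((((R i).erase i).filter
      (fun j => peak R hs S b j = true)).card % 2 = 1) := by
    conv_lhs => rw [peak]
    rw [if_pos hi, card_attach_filter ((R i).erase i) (fun k => peak R hs S b k = true)]
  set c := (((R i).erase i).filter fun j => peak R hs S b j = true).card with hc
  rcases Nat.mod_two_eq_zero_or_one c with h | h <;> rw [hpi] <;> simp [h] <;> omega

lemma peak_unique (R : Fin n → Finset (Fin n)) (hmem : ∀ i, i ∈ R i)
    (hscope : ∀ i, ∀ j ∈ R i, j ≤ i) (S : Finset (Fin n)) (b : Fin n → Bool)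
    (x y : Fin n → Bool)
    (hx1 : ∀ i ∉ S, x i = b i) (hx2 : ∀ i ∈ S, par (R i) x = 0)
    (hy1 : ∀ i ∉ S, y i = b i) (hy2 : ∀ i ∈ S, par (R i) y = 0) : x = y := by
  have H : ∀ m : ℕ, ∀ i : Fin n, (i:ℕ) = m → x i = y i := by
    intro m
    induction m using Nat.strong_induction_on with
    | _ m ih =>
      intro i him
      by_cases hiS : i ∈ S
      · have hx := hx2 i hiS
        have hy := hy2 i hiS
        rw [par_split _ _ i (hmem i)] at hx hy
        have hfeq : ((R i).erase i).filter (fun j => x j = true)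
            = ((R i).erase i).filter (fun j => y j = true) := by
          apply Finset.filter_congr
          intro j hj
          have hji : (j:ℕ) < (i:ℕ) := Fin.lt_def.mp
            (lt_of_le_of_ne (hscope i j (Finset.mem_of_mem_erase hj))
              (Finset.ne_of_mem_erase hj))
          rw [ih j.val (him ▸ hji) j rfl]
        rw [hfeq] at hx
        cases hxi : x i <;> cases hyi : y i <;>
          simp [hxi, hyi] at hx hy ⊢ <;> omega
      · rw [hx1 i hiS, hy1 i hiS]
  funext i
  exact H i.val i rfl

/-- Matoušek AUSOs are semismooth: the restriction to every subcube has a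
unique local peak. -/
theorem matousek_semismooth (R : Fin n → Finset (Fin n))
    (hmem : ∀ i, i ∈ R i) (hscope : ∀ i, ∀ j ∈ R i, j ≤ i) :
    ∀ (S : Finset (Fin n)) (b : Fin n → Bool),
      ∃! x : Fin n → Bool,
        (∀ i ∉ S, x i = b i) ∧ (∀ i ∈ S, matF R (flipBit x i) ≤ matF R x) := by
  intro S b
  refine ⟨peak R hscope S b, ⟨peak_notMem R hscope S b, ?_⟩, ?_⟩
  · intro i hi
    rw [flip_le_iff R hmem hscope]
    exact peak_spec R hmem hscope S b i hi
  · rintro y ⟨hy1, hy2⟩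
    exact peak_unique R hmem hscope S b y (peak R hscope S b) hy1
      (fun i hi => (flip_le_iff R hmem hscope y i).mp (hy2 i hi))
      (peak_notMem R hscope S b)
      (peak_spec R hmem hscope S b)
end

section
/- In a ≺-smooth fitness landscape, along any ascent x⁰, x¹, …, x^T (each step a single-bit flip strictly increasing fitness, ending at a local peak), the set of correct indices is monotone nondecreasing: φ⊖(x⁰) ⊆ φ⊖(x¹) ⊆ … ⊆ φ⊖(x^T) = [n]. -/
/-!
At a point `x`, an index `j` all of whose `≺`-predecessors already agree with the optimum is
in the in-map exactly when `x j = x* j`: this is what `≺`-smoothness says. By well-founded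
induction along `≺`, `i` is therefore correct at `x` iff `x` agrees with `x*` on `{j | j ⪯ i}`.
An improving flip of `k` cannot have `k ⪯ i` for a correct `i` (otherwise `k` would be in the
in-map), so it leaves `x` unchanged on that down-set and `i` stays correct.
-/

variable {n : ℕ}

/-- `i` is correct at `x` (`i ∈ φ⊖(x)`): every `j ⪯ i` is in the in-map
`φ⁻(x)`, i.e. flipping `j` does not increase fitness. -/
def Correct (r : Fin n → Fin n → Prop) (f : (Fin n → Bool) → ℤ)
    (x : Fin n → Bool) (i : Fin n) : Prop :=
  ∀ j, (r j i ∨ j = i) → f (flipBit x j) ≤ f x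

theorem flipBit_apply_of_ne (x : Fin n → Bool) {i j : Fin n} (h : j ≠ i) :
    flipBit x i j = x j :=
  Function.update_of_ne h _ _

theorem flipBit_flipBit (x : Fin n → Bool) (i : Fin n) : flipBit (flipBit x i) i = x := by
  simp [flipBit]

namespace PrecSmooth

variable {r : Fin n → Fin n → Prop} {f : (Fin n → Bool) → ℤ} {xs : Fin n → Bool}

theorem flipBit_lt_of_apply_eq (hs : PrecSmooth r f xs) {x : Fin n → Bool} {j : Fin n}
    (hpred : ∀ k, r k j → x k = xs k) (hj : x j = xs j) : f (flipBit x j) < f x := by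
  have := hs j x hpred
  rwa [← hj, Function.update_eq_self] at this

theorem flipBit_le_iff (hs : PrecSmooth r f xs) {x : Fin n → Bool} {j : Fin n}
    (hpred : ∀ k, r k j → x k = xs k) : f (flipBit x j) ≤ f x ↔ x j = xs j := by
  refine ⟨fun hle => ?_, fun hj => (hs.flipBit_lt_of_apply_eq hpred hj).le⟩
  by_contra hj
  have hpred' : ∀ k, r k j → flipBit x j k = xs k := by
    intro k hk
    have hkj : k ≠ j := by rintro rfl; exact hj (hpred k hk)
    rw [flipBit_apply_of_ne x hkj, hpred k hk]
  have hflip : flipBit x j j = xs j := by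
    rw [flipBit, Function.update_self]
    exact (Bool.eq_not.2 (Ne.symm hj)).symm
  have := hs.flipBit_lt_of_apply_eq hpred' hflip
  rw [flipBit_flipBit] at this
  exact this.not_ge hle

theorem correct_iff [IsStrictOrder (Fin n) r] (hs : PrecSmooth r f xs) {x : Fin n → Bool}
    {i : Fin n} : Correct r f x i ↔ ∀ j, (r j i ∨ j = i) → x j = xs j := by
  have below_of_le {j k : Fin n} (hji : r j i ∨ j = i) (hkj : r k j) : r k i ∨ k = i := by
    rcases hji with hji | rfl
    exacts [.inl (_root_.trans hkj hji), .inl hkj]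
  constructor
  · intro hc j
    induction j using (Finite.wellFounded_of_trans_of_irrefl r).induction with
    | _ j ih =>
      intro hji
      exact (hs.flipBit_le_iff fun k hk => ih k hk (below_of_le hji hk)).1 (hc j hji)
  · intro hagree j hji
    exact (hs.flipBit_le_iff fun k hk => hagree k (below_of_le hji hk)).2 (hagree j hji)

theorem correct_flipBit_of_lt [IsStrictOrder (Fin n) r] (hs : PrecSmooth r f xs)
    {x : Fin n → Bool} {k i : Fin n} (hlt : f x < f (flipBit x k)) (hc : Correct r f x i) :
    Correct r f (flipBit x k) i := by
  have hk : ¬(r k i ∨ k = i) := fun hki => (hc k hki).not_gt hlt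
  rw [hs.correct_iff] at hc ⊢
  intro j hji
  have hjk : j ≠ k := by rintro rfl; exact hk hji
  rw [flipBit_apply_of_ne x hjk]
  exact hc j hji

end PrecSmooth

/-- Along any ascent in a `≺`-smooth landscape, the set of correct indices
`φ⊖` is monotone nondecreasing, and at the final local peak every index is
correct. -/
theorem correct_set_monotone_along_ascent
    (f : (Fin n → Bool) → ℤ) (r : Fin n → Fin n → Prop)
    (hr : IsStrictOrder (Fin n) r) (xs : Fin n → Bool)
    (hs : PrecSmooth r f xs) (T : ℕ) (p : ℕ → (Fin n → Bool))
    (hstep : ∀ t < T, (∃ i, p (t + 1) = flipBit (p t) i) ∧ f (p t) < f (p (t + 1)))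
    (hpeak : ∀ i, f (flipBit (p T) i) ≤ f (p T)) :
    (∀ s t, s ≤ t → t ≤ T → ∀ i, Correct r f (p s) i → Correct r f (p t) i) ∧
    (∀ i, Correct r f (p T) i) := by
  have mono : MonotoneOn (fun t => {i | Correct r f (p t) i}) (Set.Iic T) := by
    refine monotoneOn_of_le_succ Set.ordConnected_Iic fun t _ _ ht i hc => ?_
    rw [Order.succ_eq_add_one] at ht ⊢
    obtain ⟨⟨k, hk⟩, hlt⟩ := hstep t ht
    rw [hk] at hlt ⊢
    exact hs.correct_flipBit_of_lt hlt hc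
  exact ⟨fun s t hst htT i => @mono s (hst.trans htT) t htT hst i,
    fun i j _ => hpeak j⟩
end

section
/- In a ≺-smooth landscape, if i ∈ φ⊖(x) (i is correct at x) then x_i = x*_i, where x* is the optimum. -/
/-! Well-founded induction along `≺`: correctness of `i` passes to every `j ≺ i`, so `x` already
agrees with `x*` below `i`, and then smoothness at `i` says that flipping a wrong bit `i` would
strictly increase `f`. -/

variable {n : ℕ}

theorem PrecSmooth.eq_of_flipBit_le {r : Fin n → Fin n → Prop} {f : (Fin n → Bool) → ℤ}
    {xs : Fin n → Bool} (hs : PrecSmooth r f xs) {x : Fin n → Bool} {j : Fin n}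
    (hbelow : ∀ i, r i j → x i = xs i) (hflip : f (flipBit x j) ≤ f x) : x j = xs j := by
  by_contra hne
  have hx : x j = !xs j := by simpa [Bool.eq_not_iff] using hne
  have hgt := hs j x hbelow
  rw [← hx, Function.update_eq_self] at hgt
  rw [flipBit, hx, Bool.not_not] at hflip
  omega

theorem Correct.of_rel {r : Fin n → Fin n → Prop} [IsTrans (Fin n) r] {f : (Fin n → Bool) → ℤ}
    {x : Fin n → Bool} {i j : Fin n} (hi : Correct r f x i) (hji : r j i) : Correct r f x j := by
  rintro k (hkj | rfl)
  · exact hi k (Or.inl (_root_.trans hkj hji))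
  · exact hi k (Or.inl hji)

/-- In a `≺`-smooth landscape, a correct index agrees with the optimum. -/
theorem correct_agrees_with_optimum
    (f : (Fin n → Bool) → ℤ) (r : Fin n → Fin n → Prop)
    (hr : IsStrictOrder (Fin n) r) (xs : Fin n → Bool)
    (hs : PrecSmooth r f xs) (x : Fin n → Bool) (i : Fin n)
    (hi : Correct r f x i) : x i = xs i := by
  have hwf : WellFounded r := Finite.wellFounded_of_trans_of_irrefl r
  induction i using hwf.induction with
  | _ i ih =>
    exact hs.eq_of_flipBit_le (fun j hji => ih j hji (hi.of_rel hji)) (hi i (Or.inr rfl))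
end

section
/- On a ≺-smooth fitness landscape on n bits, the JumpToBest algorithm—which from x jumps to the maximizer of f over the face {0,1}^{φ⁺(x)} x[φ⁻(x)]—reaches the global peak x* in at most height(≺) steps, where height(≺) is the length of the longest chain in the partial order. -/
/-!
By well-founded induction along `≺`, smoothness forces a correct index to carry its value at the
peak. If every strict predecessor of `i` is correct at `x`, then `i` is correct after one jump: the
predecessors are not improving, so the jump keeps them at their peak values, and smoothness then
makes every `j ≺ i` non-improving at the target, while `i` itself is either kept at its peak value
or free, and then the target is optimal along `i`. Hence an index that is still incorrect after
`t` jumps tops a `≺`-chain of `t + 1` elements, so after `height(≺)` jumps every index is correct.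
-/

variable {n : ℕ}

/-- One step of `JumpToBest`: jump to a maximizer of `f` over the face whose
free coordinates are the improving indices `φ⁺(x)` with background `x`. -/
noncomputable def jumpToBest (f : (Fin n → Bool) → ℤ) (x : Fin n → Bool) :
    Fin n → Bool :=
  Classical.choose
    ((Finset.univ.filter fun z : Fin n → Bool =>
        ∀ i, ¬ f x < f (flipBit x i) → z i = x i).exists_max_image f
      ⟨x, by simp⟩)

variable {f : (Fin n → Bool) → ℤ} {r : Fin n → Fin n → Prop} {xs : Fin n → Bool}

lemma jumpToBest_apply_of_not_improving {x : Fin n → Bool} {i : Fin n}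
    (hi : ¬ f x < f (flipBit x i)) : jumpToBest f x i = x i := by
  unfold jumpToBest
  generalize_proofs hE
  exact (Finset.mem_filter.mp (Classical.choose_spec hE).1).2 i hi

lemma le_jumpToBest {x z : Fin n → Bool} (hz : ∀ i, ¬ f x < f (flipBit x i) → z i = x i) :
    f z ≤ f (jumpToBest f x) := by
  unfold jumpToBest
  generalize_proofs hE
  exact (Classical.choose_spec hE).2 z (Finset.mem_filter.mpr ⟨Finset.mem_univ z, hz⟩)

namespace PrecSmooth

lemma flipBit_lt (hs : PrecSmooth r f xs) {x : Fin n → Bool} {i : Fin n}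
    (hpred : ∀ j, r j i → x j = xs j) (hi : x i = xs i) : f (flipBit x i) < f x := by
  have := hs i x hpred
  rwa [← hi, Function.update_eq_self] at this

lemma lt_flipBit (hs : PrecSmooth r f xs) {x : Fin n → Bool} {i : Fin n}
    (hpred : ∀ j, r j i → x j = xs j) (hi : x i ≠ xs i) : f x < f (flipBit x i) := by
  have := hs i x hpred
  rwa [Bool.eq_not.mpr (Ne.symm hi), Bool.not_not, Function.update_eq_self] at this

lemma eq_of_correct (hr : IsStrictOrder (Fin n) r) (hs : PrecSmooth r f xs)
    {x : Fin n → Bool} {i : Fin n} (hi : Correct r f x i) : x i = xs i := by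
  have : IsTrans (Fin n) r := hr.toIsTrans
  have : Std.Irrefl r := hr.toIrrefl
  induction i using (Finite.wellFounded_of_trans_of_irrefl r).induction with
  | _ i ih =>
    have hpred : ∀ j, r j i → x j = xs j := fun j hji =>
      ih j hji fun k hk => hi k (.inl (hk.elim (fun hkj => _root_.trans hkj hji) (· ▸ hji)))
    by_contra hne
    exact (hs.lt_flipBit hpred hne).not_ge (hi i (.inr rfl))

lemma correct_jumpToBest (hr : IsStrictOrder (Fin n) r) (hs : PrecSmooth r f xs)
    {x : Fin n → Bool} {i : Fin n} (hpred : ∀ j, r j i → Correct r f x j) :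
    Correct r f (jumpToBest f x) i := by
  have : IsTrans (Fin n) r := hr.toIsTrans
  set y := jumpToBest f x
  have hx : ∀ j, r j i → x j = xs j := fun j hji => hs.eq_of_correct hr (hpred j hji)
  have hy : ∀ j, r j i → y j = xs j := fun j hji =>
    (jumpToBest_apply_of_not_improving (not_lt.mpr (hpred j hji j (.inr rfl)))).trans (hx j hji)
  rintro j (hji | rfl)
  · exact (hs.flipBit_lt (fun k hkj => hy k (_root_.trans hkj hji)) (hy j hji)).le
  · by_cases himp : f x < f (flipBit x j)
    · refine le_jumpToBest fun k hk => ?_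
      have hkj : k ≠ j := by rintro rfl; exact hk himp
      rw [flipBit, Function.update_of_ne hkj]
      exact jumpToBest_apply_of_not_improving hk
    · have hxj : x j = xs j := by
        by_contra hne
        exact himp (hs.lt_flipBit hx hne)
      exact (hs.flipBit_lt hy ((jumpToBest_apply_of_not_improving himp).trans hxj)).le

lemma exists_relSeries_of_not_correct (hr : IsStrictOrder (Fin n) r) (hs : PrecSmooth r f xs)
    (x0 : Fin n → Bool) {t : ℕ} {i : Fin n} (hi : ¬ Correct r f ((jumpToBest f)^[t] x0) i) :
    ∃ p : RelSeries {(a, b) | r a b}, p.length = t ∧ p.last = i := by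
  induction t generalizing i with
  | zero => exact ⟨RelSeries.singleton _ i, rfl, RelSeries.last_singleton i⟩
  | succ t ih =>
    rw [Function.iterate_succ_apply'] at hi
    obtain ⟨j, hji, hj⟩ : ∃ j, r j i ∧ ¬ Correct r f ((jumpToBest f)^[t] x0) j := by
      by_contra! hpred
      exact hi (hs.correct_jumpToBest hr hpred)
    obtain ⟨p, hlen, hlast⟩ := ih hj
    exact ⟨p.snoc i (hlast ▸ hji), by simp [hlen], RelSeries.last_snoc _ _ _⟩

end PrecSmooth

/-- On a `≺`-smooth landscape, `JumpToBest` reaches the peak `xs` within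
`height(≺)` steps: if `h` bounds the length of every `r`-chain then `h`
iterations suffice from any starting assignment. -/
theorem jumpToBest_reaches_peak_in_height_steps
    (f : (Fin n → Bool) → ℤ) (r : Fin n → Fin n → Prop)
    (hr : IsStrictOrder (Fin n) r) (xs : Fin n → Bool)
    (hs : PrecSmooth r f xs) (h : ℕ)
    (hh : ∀ (k : ℕ) (c : Fin k → Fin n),
      (∀ a b : Fin k, a < b → r (c a) (c b)) → k ≤ h)
    (x0 : Fin n → Bool) :
    (jumpToBest f)^[h] x0 = xs := by
  have : IsTrans (Fin n) r := hr.toIsTrans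
  funext i
  refine hs.eq_of_correct hr ?_
  by_contra hi
  obtain ⟨p, hlen, -⟩ := hs.exists_relSeries_of_not_correct hr x0 hi
  have := hh (p.length + 1) p fun a b hab => p.rel_of_lt hab
  omega
end
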